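/- arXiv:2408.04417 — 3 statements merged into one kernel-verified Lean document; each statement's English description precedes it below -/
import Mathlib

section
/- The Motzkin polynomial f(x,y) = x⁴y² + x²y⁴ - 3x²y² + 1 is not a sum of squares of polynomials in ℝ[x,y]. -/
open MvPolynomial

/-- The Motzkin polynomial as an element of `ℝ[x,y]`. -/
noncomputable def motzkin : MvPolynomial (Fin 2) ℝ :=
  X 0 ^ 4 * X 1 ^ 2 + X 0 ^ 2 * X 1 ^ 4 - C 3 * X 0 ^ 2 * X 1 ^ 2 + 1

/-!
Suppose `motzkin = ∑ qᵢ²`. For any weight `ℓ` on exponents, a monomial of the `qᵢ` that is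
`ℓ`-maximal (ties broken lexicographically) arises in `∑ qᵢ²` only from its own square, so it
survives with a positive coefficient; hence every exponent of every `qᵢ` has at most half the
largest `ℓ`-weight of the Motzkin polynomial. Applied to the three edges of the Newton polygon
this confines the `qᵢ` to the monomials `1, xy, x²y, xy²`, and among these `x²y²` only arises
as `(xy)²`. So the coefficient `-3` of `x²y²` would be a sum of squares of reals.
-/

open Finsupp

theorem IsSumSq.exists_fin_sum_mul_self {R : Type*} [AddCommMonoid R] [Mul R] {a : R}
    (h : IsSumSq a) : ∃ (n : ℕ) (q : Fin n → R), a = ∑ i, q i * q i := by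
  induction h with
  | zero => exact ⟨0, Fin.elim0, by simp⟩
  | sq_add a _ ih =>
    obtain ⟨n, q, rfl⟩ := ih
    exact ⟨n + 1, Fin.cons a q, by simp [Fin.sum_univ_succ]⟩

section NewtonPolytope

variable {σ R Γ : Type*} [AddCommMonoid Γ] [LinearOrder Γ] [IsOrderedCancelAddMonoid Γ]

theorem Finset.exists_max_image_add_self_unique [LinearOrder σ] (S : Finset (σ →₀ ℕ))
    (hS : S.Nonempty) (ℓ : (σ →₀ ℕ) →+ Γ) :
    ∃ α ∈ S, (∀ β ∈ S, ℓ β ≤ ℓ α) ∧ ∀ u ∈ S, ∀ v ∈ S, u + v = α + α → u = α := by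
  obtain ⟨α₀, hα₀, hmax₀⟩ := S.exists_max_image ℓ hS
  obtain ⟨α, hα, hmax⟩ :=
    (S.filter (ℓ · = ℓ α₀)).exists_max_image toLex ⟨α₀, by simp [hα₀]⟩
  rw [Finset.mem_filter] at hα
  have hmaxα : ∀ β ∈ S, ℓ β ≤ ℓ α := fun β hβ => hα.2 ▸ hmax₀ β hβ
  refine ⟨α, hα.1, hmaxα, fun u hu v hv huv => ?_⟩
  have hℓ : ℓ u = ℓ α ∧ ℓ v = ℓ α :=
    (add_eq_add_iff_eq_and_eq (hmaxα u hu) (hmaxα v hv)).1 (by rw [← map_add, huv, map_add])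
  have hlex : toLex u = toLex α ∧ toLex v = toLex α :=
    (add_eq_add_iff_eq_and_eq (hmax u (by simp [hu, hℓ.1, hα.2]))
      (hmax v (by simp [hv, hℓ.2, hα.2]))).1 (by rw [← toLex_add, huv, toLex_add])
  exact toLex.injective hlex.1

namespace MvPolynomial

theorem coeff_add_self_mul_self_of_unique [CommSemiring R] {q : MvPolynomial σ R}
    {α : σ →₀ ℕ} (h : ∀ u ∈ q.support, ∀ v ∈ q.support, u + v = α + α → u = α) :
    coeff (α + α) (q * q) = coeff α q * coeff α q := by
  classical
  rw [coeff_mul]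
  refine Finset.sum_eq_single (α, α) (fun ⟨u, v⟩ huv hne => ?_) (by simp)
  rw [Finset.HasAntidiagonal.mem_antidiagonal] at huv
  by_contra hne0
  obtain ⟨hu, hv⟩ : u ∈ q.support ∧ v ∈ q.support := by
    simp only [mem_support_iff]
    constructor <;> rintro h0 <;> simp [h0] at hne0
  obtain rfl := h u hu v hv huv
  exact hne (by simpa using huv)

theorem le_of_mem_support_sum_mul_self [CommRing R] [LinearOrder R] [IsStrictOrderedRing R]
    [LinearOrder σ] {ι : Type*} [Fintype ι] {q : ι → MvPolynomial σ R} (ℓ : (σ →₀ ℕ) →+ Γ)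
    {c : Γ} (h : ∀ β ∈ (∑ i, q i * q i).support, ℓ β ≤ c + c) (i : ι) {β : σ →₀ ℕ}
    (hβ : β ∈ (q i).support) : ℓ β ≤ c := by
  classical
  set S := Finset.univ.biUnion fun j => (q j).support
  have hS : ∀ j, (q j).support ⊆ S := fun j =>
    Finset.subset_biUnion_of_mem (fun k => (q k).support) (Finset.mem_univ j)
  obtain ⟨α, hαS, hmax, huniq⟩ := S.exists_max_image_add_self_unique ⟨β, hS i hβ⟩ ℓ
  obtain ⟨j, -, hαj⟩ := Finset.mem_biUnion.1 hαS
  have hcoeff : coeff (α + α) (∑ j, q j * q j) = ∑ j, coeff α (q j) * coeff α (q j) := by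
    rw [coeff_sum]
    exact Finset.sum_congr rfl fun k _ =>
      coeff_add_self_mul_self_of_unique fun u hu v hv => huniq u (hS k hu) v (hS k hv)
  have hpos : 0 < coeff (α + α) (∑ j, q j * q j) := by
    rw [hcoeff]
    exact Finset.sum_pos' (fun k _ => mul_self_nonneg _)
      ⟨j, Finset.mem_univ j, mul_self_pos.2 (mem_support_iff.1 hαj)⟩
  have hαc : ℓ α + ℓ α ≤ c + c := map_add ℓ α α ▸ h _ (mem_support_iff.2 hpos.ne')
  exact (hmax β (hS i hβ)).trans (le_of_not_gt fun hlt => (add_lt_add hlt hlt).not_ge hαc)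

end MvPolynomial

end NewtonPolytope

theorem motzkin_eq_sum_monomial : motzkin = monomial (single 0 4 + single 1 2) 1
    + monomial (single 0 2 + single 1 4) 1 - monomial (single 0 2 + single 1 2) 3 + 1 := by
  simp only [motzkin, X_pow_eq_monomial, monomial_mul, C_mul_monomial, mul_one]

theorem support_motzkin : motzkin.support ⊆
    {single 0 4 + single 1 2, single 0 2 + single 1 4, single 0 2 + single 1 2, 0} := by
  classical
  intro β hβ
  contrapose! hβ
  simp only [Finset.mem_insert, Finset.mem_singleton, not_or] at hβ
  obtain ⟨h₁, h₂, h₃, h₄⟩ := hβ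
  simp [motzkin_eq_sum_monomial, coeff_monomial, coeff_one, Ne.symm h₁, Ne.symm h₂,
    Ne.symm h₃, Ne.symm h₄]

theorem coeff_motzkin_two_two : coeff (single 0 2 + single 1 2) motzkin = -3 := by
  classical
  simp [motzkin_eq_sum_monomial, coeff_monomial, Finsupp.ext_iff, Fin.forall_fin_two, coeff_one]

/-- The lattice points of `½ N(motzkin) = conv {(0,0), (2,1), (1,2)}`, one inequality per edge. -/
def motzkinHalfNewton : Set (Fin 2 →₀ ℕ) :=
  {β | β 0 + β 1 ≤ 3 ∧ β 0 ≤ 2 * β 1 ∧ β 1 ≤ 2 * β 0}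

theorem support_subset_motzkinHalfNewton {ι : Type*} [Fintype ι]
    {q : ι → MvPolynomial (Fin 2) ℝ} (h : motzkin = ∑ i, q i * q i) (i : ι) :
    ↑(q i).support ⊆ motzkinHalfNewton := by
  intro β hβ
  have hle (w : Fin 2 → ℤ) (c : ℤ) (hw : 4 * w 0 + 2 * w 1 ≤ c + c ∧
      2 * w 0 + 4 * w 1 ≤ c + c ∧ 2 * w 0 + 2 * w 1 ≤ c + c ∧ 0 ≤ c + c) :
      β 0 * w 0 + β 1 * w 1 ≤ c := by
    have hsupp : ∀ γ ∈ motzkin.support, weight w γ ≤ c + c := by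
      intro γ hγ
      have := support_motzkin hγ
      simp only [Finset.mem_insert, Finset.mem_singleton] at this
      rcases this with rfl | rfl | rfl | rfl <;> simp [weight_single] <;> linarith
    simpa [weight_eq_sum, Fin.sum_univ_two] using
      le_of_mem_support_sum_mul_self (weight w) (h ▸ hsupp) i hβ
  have h₁ := hle ![1, 1] 3 (by norm_num)
  have h₂ := hle ![1, -2] 0 (by norm_num)
  have h₃ := hle ![-2, 1] 0 (by norm_num)
  simp only [Matrix.cons_val_zero, Matrix.cons_val_one] at h₁ h₂ h₃
  simp only [motzkinHalfNewton, Set.mem_ofPred_eq]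
  omega

theorem eq_of_add_eq_of_mem_motzkinHalfNewton {u v : Fin 2 →₀ ℕ} (hu : u ∈ motzkinHalfNewton)
    (hv : v ∈ motzkinHalfNewton) (huv : u + v = single 0 2 + single 1 2) :
    u = single 0 1 + single 1 1 := by
  have h₀ : u 0 + v 0 = 2 := by simpa using congrArg (· 0) huv
  have h₁ : u 1 + v 1 = 2 := by simpa using congrArg (· 1) huv
  simp only [motzkinHalfNewton, Set.mem_ofPred_eq] at hu hv
  obtain ⟨hu₀, hu₁⟩ : u 0 = 1 ∧ u 1 = 1 := by omega
  ext i
  fin_cases i <;> simp [hu₀, hu₁]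

/-- The Motzkin polynomial is not a sum of squares of polynomials in `ℝ[x,y]`. -/
theorem motzkin_not_sos : ¬ IsSumSq motzkin := by
  intro hsos
  obtain ⟨n, q, hq⟩ := hsos.exists_fin_sum_mul_self
  set α : Fin 2 →₀ ℕ := single 0 1 + single 1 1
  have hα : α + α = single 0 2 + single 1 2 := by
    ext i
    fin_cases i <;> simp [α]
  have hcoeff : coeff (α + α) motzkin = ∑ i, coeff α (q i) * coeff α (q i) := by
    rw [hq, coeff_sum]
    refine Finset.sum_congr rfl fun i _ =>
      coeff_add_self_mul_self_of_unique fun u hu v hv huv => ?_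
    exact eq_of_add_eq_of_mem_motzkinHalfNewton (support_subset_motzkinHalfNewton hq i hu)
      (support_subset_motzkinHalfNewton hq i hv) (huv.trans hα)
  rw [hα, coeff_motzkin_two_two] at hcoeff
  linarith [Finset.sum_nonneg fun i (_ : i ∈ Finset.univ) => mul_self_nonneg (coeff α (q i))]
end

section
/- If a finite set of points x⁽¹⁾,...,x⁽ᴺ⁾ ∈ X with positive weights w₁,...,w_N forms a cubature rule exact on polynomials of degree ≤ deg(f) + 2r for the measure μ, then ub(f,X,μ)_r ≥ min_i f(x⁽ⁱ⁾) ≥ f_min. -/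
/-!
Exactness of the cubature on `σ` and on `f * σ` turns the Lasserre objective `∫_X f σ dμ` into
the combination `∑ᵢ wᵢ σ(x⁽ⁱ⁾) f(x⁽ⁱ⁾)`, whose coefficients are nonnegative (σ is a sum of
squares) and sum to `∫_X σ dμ = 1`; hence it is at least `minᵢ f(x⁽ⁱ⁾)`. The infimum defining the
bound is over a nonempty set, since the constant density `1 / ∑ᵢ wᵢ` is feasible.
-/

open MvPolynomial MeasureTheory

/-- Lasserre's upper bound of level `r` for minimizing `f` over `X` w.r.t. `μ`. -/
noncomputable def lasserreUB {n : ℕ} (f : MvPolynomial (Fin n) ℝ) (X : Set (Fin n → ℝ))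
    (μ : Measure (Fin n → ℝ)) (r : ℕ) : ℝ :=
  sInf {v : ℝ | ∃ σ : MvPolynomial (Fin n) ℝ, IsSumSq σ ∧ σ.totalDegree ≤ 2 * r ∧
    (∫ x in X, eval x σ ∂μ) = 1 ∧ v = ∫ x in X, eval x f * eval x σ ∂μ}

theorem IsSumSq.map {R S F : Type*} [AddMonoid R] [Mul R] [AddMonoid S] [Mul S]
    [FunLike F R S] [AddMonoidHomClass F R S] [MulHomClass F R S] (φ : F) {s : R}
    (hs : IsSumSq s) : IsSumSq (φ s) := by
  induction hs with
  | zero => rw [map_zero]; exact .zero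
  | sq_add a _ ih => simpa only [map_add, map_mul] using ih.sq_add (φ a)

theorem Finset.le_sum_mul_of_sum_eq_one {ι R : Type*} [CommSemiring R] [PartialOrder R]
    [IsOrderedRing R] {s : Finset ι} {c f : ι → R} {a : R} (hc : ∀ i ∈ s, 0 ≤ c i)
    (hc₁ : ∑ i ∈ s, c i = 1) (hf : ∀ i ∈ s, a ≤ f i) : a ≤ ∑ i ∈ s, c i * f i :=
  calc a = ∑ i ∈ s, c i * a := by rw [← Finset.sum_mul, hc₁, one_mul]
    _ ≤ ∑ i ∈ s, c i * f i :=
      Finset.sum_le_sum fun i hi => mul_le_mul_of_nonneg_left (hf i hi) (hc i hi)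

theorem MvPolynomial.eval_nonneg_of_isSumSq {σ : Type*} {p : MvPolynomial σ ℝ}
    (hp : IsSumSq p) (x : σ → ℝ) : 0 ≤ eval x p :=
  (hp.map (eval x)).nonneg

section Lasserre

variable {n : ℕ} {X : Set (Fin n → ℝ)} {μ : Measure (Fin n → ℝ)} {r : ℕ}

def IsLasserreFeasible (X : Set (Fin n → ℝ)) (μ : Measure (Fin n → ℝ)) (r : ℕ)
    (σ : MvPolynomial (Fin n) ℝ) : Prop :=
  IsSumSq σ ∧ σ.totalDegree ≤ 2 * r ∧ ∫ x in X, eval x σ ∂μ = 1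

theorem le_lasserreUB {f : MvPolynomial (Fin n) ℝ} {m : ℝ}
    (hfeas : ∃ σ, IsLasserreFeasible X μ r σ)
    (hle : ∀ σ, IsLasserreFeasible X μ r σ → m ≤ ∫ x in X, eval x f * eval x σ ∂μ) :
    m ≤ lasserreUB f X μ r := by
  obtain ⟨σ₀, hsos₀, hdeg₀, hint₀⟩ := hfeas
  refine le_csInf ⟨_, σ₀, hsos₀, hdeg₀, hint₀, rfl⟩ ?_
  rintro v ⟨σ, hsos, hdeg, hint, rfl⟩
  exact hle σ ⟨hsos, hdeg, hint⟩

def IsCubatureRule {ι : Type*} [Fintype ι] (X : Set (Fin n → ℝ)) (μ : Measure (Fin n → ℝ))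
    (d : ℕ) (pts : ι → Fin n → ℝ) (w : ι → ℝ) : Prop :=
  ∀ p : MvPolynomial (Fin n) ℝ, p.totalDegree ≤ d →
    ∫ x in X, eval x p ∂μ = ∑ i, w i * eval (pts i) p

namespace IsCubatureRule

variable {ι : Type*} [Fintype ι] {d : ℕ} {pts : ι → Fin n → ℝ} {w : ι → ℝ}

theorem isLasserreFeasible_const (hcub : IsCubatureRule X μ d pts w) (hw : 0 < ∑ i, w i) :
    IsLasserreFeasible X μ r (C (∑ i, w i)⁻¹) := by
  refine ⟨((Real.isSquare_iff.2 (inv_nonneg.2 hw.le)).map C).isSumSq, by simp, ?_⟩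
  rw [hcub _ (by simp)]
  simp only [eval_C, ← Finset.sum_mul, mul_inv_cancel₀ hw.ne']

theorem iInf_le_integral_mul {f σ : MvPolynomial (Fin n) ℝ}
    (hcub : IsCubatureRule X μ (f.totalDegree + 2 * r) pts w) (hw : ∀ i, 0 ≤ w i)
    (hσ : IsLasserreFeasible X μ r σ) :
    ⨅ i, eval (pts i) f ≤ ∫ x in X, eval x f * eval x σ ∂μ := by
  obtain ⟨hsos, hdeg, hint⟩ := hσ
  have hmass : ∑ i, w i * eval (pts i) σ = 1 := (hcub σ (by omega)).symm.trans hint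
  have hobj : ∫ x in X, eval x f * eval x σ ∂μ =
      ∑ i, w i * eval (pts i) σ * eval (pts i) f := by
    have hdeg_mul : (f * σ).totalDegree ≤ f.totalDegree + 2 * r :=
      (totalDegree_mul f σ).trans (by omega)
    simpa only [map_mul, mul_comm, mul_left_comm] using hcub (f * σ) hdeg_mul
  rw [hobj]
  exact Finset.le_sum_mul_of_sum_eq_one
    (fun i _ => mul_nonneg (hw i) (eval_nonneg_of_isSumSq hsos _)) hmass
    (fun i _ => ciInf_le (Set.finite_range _).bddBelow i)

theorem iInf_le_lasserreUB [Nonempty ι] {f : MvPolynomial (Fin n) ℝ}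
    (hcub : IsCubatureRule X μ (f.totalDegree + 2 * r) pts w) (hw : ∀ i, 0 < w i) :
    ⨅ i, eval (pts i) f ≤ lasserreUB f X μ r :=
  le_lasserreUB
    ⟨_, hcub.isLasserreFeasible_const (Finset.sum_pos (fun i _ => hw i) Finset.univ_nonempty)⟩
    fun _ hσ => hcub.iInf_le_integral_mul (fun i => (hw i).le) hσ

end IsCubatureRule

end Lasserre

theorem lasserreUB_cubature_general (n N r : ℕ) (hN : N ≠ 0) (f : MvPolynomial (Fin n) ℝ)
    (X : Set (Fin n → ℝ)) (hX : IsCompact X)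
    (μ : Measure (Fin n → ℝ))
    (pts : Fin N → (Fin n → ℝ)) (w : Fin N → ℝ)
    (hpts : ∀ i, pts i ∈ X) (hw : ∀ i, 0 < w i)
    (hcub : ∀ p : MvPolynomial (Fin n) ℝ, p.totalDegree ≤ f.totalDegree + 2 * r →
      (∫ x in X, eval x p ∂μ) = ∑ i, w i * eval (pts i) p) :
    (⨅ i, eval (pts i) f) ≤ lasserreUB f X μ r ∧
      sInf ((fun x => eval x f) '' X) ≤ ⨅ i, eval (pts i) f := by
  have : Nonempty (Fin N) := Fin.pos_iff_nonempty.1 (Nat.pos_of_ne_zero hN)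
  refine ⟨IsCubatureRule.iInf_le_lasserreUB hcub hw, ?_⟩
  have hbdd : BddBelow ((fun x => eval x f) '' X) := (hX.image f.continuous_eval).bddBelow
  exact csInf_le_csInf hbdd (Set.range_nonempty _)
    (Set.range_subset_iff.2 fun i => ⟨pts i, hpts i, rfl⟩)

/-- If points `x⁽¹⁾, ..., x⁽ᴺ⁾ ∈ X` with positive weights `w₁, ..., w_N` form a cubature
rule for `(X, μ)` exact on polynomials of degree at most `deg(f) + 2r`, then
`ub(f,X,μ)_r ≥ minᵢ f(x⁽ⁱ⁾) ≥ f_min`. -/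
theorem lasserreUB_cubature (n N r : ℕ) (hN : N ≠ 0) (f : MvPolynomial (Fin n) ℝ)
    (X : Set (Fin n → ℝ)) (hX : IsCompact X) (hne : X.Nonempty)
    (μ : Measure (Fin n → ℝ)) [IsFiniteMeasure μ]
    (pts : Fin N → (Fin n → ℝ)) (w : Fin N → ℝ)
    (hpts : ∀ i, pts i ∈ X) (hw : ∀ i, 0 < w i)
    (hcub : ∀ p : MvPolynomial (Fin n) ℝ, p.totalDegree ≤ f.totalDegree + 2 * r →
      (∫ x in X, eval x p ∂μ) = ∑ i, w i * eval (pts i) p) :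
    (⨅ i, eval (pts i) f) ≤ lasserreUB f X μ r ∧
      sInf ((fun x => eval x f) '' X) ≤ ⨅ i, eval (pts i) f :=
  lasserreUB_cubature_general n N r hN f X hX μ pts w hpts hw hcub
end

section
/- Let K be a linear operator on ℝ[x₁,...,xₙ] with K(1) = 1, such that K maps every polynomial nonnegative on X into the cone C, and such that max_{x∈X} |K⁻¹f(x) - f(x)| ≤ ε. If C is closed under addition and contains all nonnegative constants, then f - f_min + ε ∈ C, where f_min = min_X f. -/
open MvPolynomial

/-- Polynomial kernel method, abstract step: let `K` be an invertible linear operator on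
`ℝ[x]` with inverse `Kinv`, satisfying (P1) `K(1) = 1`, (P2) `K` maps every polynomial
nonnegative on `X` into the cone `C`, and (P3) `max_{x ∈ X} |K⁻¹f(x) - f(x)| ≤ ε`. If `C`
is closed under addition and contains all nonnegative constants, then
`f - f_min + ε ∈ C`, where `f_min = min_X f`. -/
theorem kernel_operator_membership (n : ℕ) (X : Set (Fin n → ℝ))
    (hX : IsCompact X) (hne : X.Nonempty)
    (C : Set (MvPolynomial (Fin n) ℝ))
    (hCadd : ∀ p ∈ C, ∀ q ∈ C, p + q ∈ C)
    (hCconst : ∀ c : ℝ, 0 ≤ c → MvPolynomial.C c ∈ C)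
    (K Kinv : MvPolynomial (Fin n) ℝ →ₗ[ℝ] MvPolynomial (Fin n) ℝ)
    (hKinv₁ : ∀ p, Kinv (K p) = p) (hKinv₂ : ∀ p, K (Kinv p) = p)
    (hK1 : K 1 = 1)
    (hKpos : ∀ p : MvPolynomial (Fin n) ℝ, (∀ x ∈ X, 0 ≤ eval x p) → K p ∈ C)
    (f : MvPolynomial (Fin n) ℝ) (ε : ℝ)
    (happrox : ∀ x ∈ X, |eval x (Kinv f) - eval x f| ≤ ε) :
    f - MvPolynomial.C (sInf ((fun x => eval x f) '' X)) + MvPolynomial.C ε ∈ C := by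

  set m := sInf ((fun x => eval x f) '' X) with hm
  have hbdd : BddBelow ((fun x => eval x f) '' X) :=
    (hX.image (by continuity)).bddBelow
  have hmle : ∀ x ∈ X, m ≤ eval x f := fun x hx =>
    csInf_le hbdd ⟨x, hx, rfl⟩
  have hKinv1 : Kinv 1 = 1 := by
    have := hKinv₁ 1
    rwa [hK1] at this
  have key : K (Kinv f - MvPolynomial.C m + MvPolynomial.C ε)
      = f - MvPolynomial.C m + MvPolynomial.C ε := by
    have hc : ∀ c : ℝ, K (MvPolynomial.C c) = MvPolynomial.C c := by
      intro c
      have : (MvPolynomial.C c : MvPolynomial (Fin n) ℝ) = c • 1 := by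
        rw [smul_eq_C_mul, mul_one]
      rw [this, map_smul, hK1]
    rw [map_add, map_sub, hKinv₂, hc, hc]
  have hpos : ∀ x ∈ X, 0 ≤ eval x (Kinv f - MvPolynomial.C m + MvPolynomial.C ε) := by
    intro x hx
    have h1 := happrox x hx
    have h2 := hmle x hx
    have h3 : eval x f - eval x (Kinv f) ≤ ε := by
      have := abs_le.mp h1
      linarith [this.1]
    simp only [eval_add, eval_sub, eval_C]
    linarith
  have := hKpos _ hpos
  rwa [key] at this
end
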